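/- Let D = D_α be the diagonal operator on E_ω associated with a bounded sequence α : ℕ → K, and assume that every diagonal entry is attained infinitely often: for every i ∈ ℕ, the set { j ∈ ℕ : α_j = α_i } is infinite. Then the essential spectrum of D equals its full spectrum: σ_e(D) = σ(D). -/

import Mathlib

open Filter Topology

/-- The non-Archimedean Hilbert space `E_ω`: the space of sequences `u : ℕ → K`
such that `‖u i‖ * ‖ω i‖^(1/2) → 0`, as a submodule of `ℕ → K`. -/
def Eomega (K : Type*) [NontriviallyNormedField K] (ω : ℕ → K) : Submodule K (ℕ → K) where
  carrier := {u | Tendsto (fun i => ‖u i‖ * Real.sqrt ‖ω i‖) atTop (𝓝 0)}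
  zero_mem' := by simpa using (tendsto_const_nhds : Tendsto (fun _ : ℕ => (0:ℝ)) atTop (𝓝 0))
  add_mem' := by
    intro u v hu hv
    have h := hu.add hv
    rw [add_zero] at h
    refine squeeze_zero (fun i => by positivity) (fun i => ?_) h
    calc ‖(u + v) i‖ * Real.sqrt ‖ω i‖
        ≤ (‖u i‖ + ‖v i‖) * Real.sqrt ‖ω i‖ := by
          have : ‖(u + v) i‖ ≤ ‖u i‖ + ‖v i‖ := by
            simpa [Pi.add_apply] using norm_add_le (u i) (v i)
          exact mul_le_mul_of_nonneg_right this (Real.sqrt_nonneg _)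
      _ = ‖u i‖ * Real.sqrt ‖ω i‖ + ‖v i‖ * Real.sqrt ‖ω i‖ := by ring
  smul_mem' := by
    intro c u hu
    have h := hu.const_mul ‖c‖
    rw [mul_zero] at h
    refine squeeze_zero (fun i => by positivity) (fun i => le_of_eq ?_) h
    simp [Pi.smul_apply, norm_smul, mul_assoc]

lemma Eomega.bddAbove {K : Type*} [NontriviallyNormedField K] {ω : ℕ → K}
    (u : Eomega K ω) :
    BddAbove (Set.range fun i => ‖(u : ℕ → K) i‖ * Real.sqrt ‖ω i‖) :=
  u.2.bddAbove_range

/-- The sup-norm on `E_ω`: `‖u‖ = sup_i ‖u i‖ * ‖ω i‖^(1/2)`. -/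
noncomputable instance Eomega.instSeminormedAddCommGroup
    {K : Type*} [NontriviallyNormedField K] {ω : ℕ → K} :
    SeminormedAddCommGroup (Eomega K ω) :=
  AddGroupSeminorm.toSeminormedAddCommGroup
    { toFun := fun u => ⨆ i, ‖(u : ℕ → K) i‖ * Real.sqrt ‖ω i‖
      map_zero' := by simp
      add_le' := by
        intro u v
        refine ciSup_le fun i => ?_
        calc ‖((u + v : Eomega K ω) : ℕ → K) i‖ * Real.sqrt ‖ω i‖
            ≤ ‖(u : ℕ → K) i‖ * Real.sqrt ‖ω i‖ + ‖(v : ℕ → K) i‖ * Real.sqrt ‖ω i‖ := by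
              have : ‖((u + v : Eomega K ω) : ℕ → K) i‖ ≤ ‖(u : ℕ → K) i‖ + ‖(v : ℕ → K) i‖ := by
                simpa using norm_add_le ((u : ℕ → K) i) ((v : ℕ → K) i)
              nlinarith [Real.sqrt_nonneg ‖ω i‖, norm_nonneg ((u : ℕ → K) i),
                norm_nonneg ((v : ℕ → K) i)]
          _ ≤ _ := add_le_add (le_ciSup (Eomega.bddAbove u) i) (le_ciSup (Eomega.bddAbove v) i)
      neg' := by intro u; simp }


/-- Shortcut instance making sure that the topology of `E_ω` used below is the
norm topology (and not the topology induced by the product topology on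
`ℕ → K`). -/
noncomputable instance (priority := 5000) Eomega.instTopologicalSpace
    {K : Type*} [NontriviallyNormedField K] {ω : ℕ → K} :
    TopologicalSpace (Eomega K ω) :=
  Eomega.instSeminormedAddCommGroup.toUniformSpace.toTopologicalSpace

/-- The diagonal operator `D = D_α` on `E_ω` associated with a bounded
sequence `α : ℕ → K`, given by `(D u) i = α i * u i`. -/
def diagOp {K : Type*} [NontriviallyNormedField K] (ω : ℕ → K) (α : ℕ → K)
    (hα : ∃ C, ∀ i, ‖α i‖ ≤ C) : Eomega K ω →ₗ[K] Eomega K ω where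
  toFun u := ⟨fun i => α i * (u : ℕ → K) i, by
    obtain ⟨C, hC⟩ := hα
    have h := u.2.const_mul C
    rw [mul_zero] at h
    refine squeeze_zero (fun i => by positivity) (fun i => ?_) h
    calc ‖α i * (u : ℕ → K) i‖ * Real.sqrt ‖ω i‖
        = ‖α i‖ * (‖(u : ℕ → K) i‖ * Real.sqrt ‖ω i‖) := by rw [norm_mul]; ring
      _ ≤ C * (‖(u : ℕ → K) i‖ * Real.sqrt ‖ω i‖) :=
          mul_le_mul_of_nonneg_right (hC i) (by positivity)⟩
  map_add' u v := by
    apply Subtype.ext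
    funext i
    simp [mul_add]
  map_smul' c u := by
    apply Subtype.ext
    funext i
    simp [Pi.smul_apply, smul_eq_mul]
    ring

/-- `T` is a Fredholm operator of index 0: its kernel is finite-dimensional,
its range is closed, and the quotient by the range is finite-dimensional of the
same dimension as the kernel. -/
def IsFredholm0 {K : Type*} [NontriviallyNormedField K] {ω : ℕ → K}
    (T : Eomega K ω →ₗ[K] Eomega K ω) : Prop :=
  FiniteDimensional K (LinearMap.ker T) ∧
  IsClosed (LinearMap.range T : Set (Eomega K ω)) ∧
  FiniteDimensional K (Eomega K ω ⧸ LinearMap.range T) ∧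
  Module.finrank K (LinearMap.ker T) =
    Module.finrank K (Eomega K ω ⧸ LinearMap.range T)

/-- The spectrum of `D`: those `μ` such that `μ·I − D` has no bounded (i.e.
continuous) two-sided inverse. -/
def specSet {K : Type*} [NontriviallyNormedField K] {ω : ℕ → K}
    (D : Eomega K ω →ₗ[K] Eomega K ω) : Set K :=
  {μ | ¬ ∃ S : Eomega K ω →ₗ[K] Eomega K ω, Continuous S ∧
        S ∘ₗ (μ • LinearMap.id - D) = LinearMap.id ∧
        (μ • LinearMap.id - D) ∘ₗ S = LinearMap.id}

/-- The essential spectrum of `D`: those `μ` such that `μ·I − D` is not a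
Fredholm operator of index 0. -/
def essSpec {K : Type*} [NontriviallyNormedField K] {ω : ℕ → K}
    (D : Eomega K ω →ₗ[K] Eomega K ω) : Set K :=
  {μ | ¬ IsFredholm0 (μ • LinearMap.id - D)}

/-! The operator `μ I - D` is the diagonal operator with entries `μ - α i`. If `μ = α i`, its
kernel contains the unit vectors `e_j` for the infinitely many `j` with `α j = α i`, so `μ` lies in
both spectra. Otherwise `μ I - D` is injective, so index `0` forces it to be surjective. A
surjective diagonal operator with nonzero entries `β` has `β` bounded away from `0`: otherwise
take `β (φ n) → 0` along a subsequence and `v = β * w` on `range φ`, where `w` has weighted norm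
about one; the only candidate preimage of `v` equals `w` on `range φ` and so does not lie in
`E_ω`. The bounded diagonal operator with entries `(μ - α i)⁻¹` is then the inverse. -/

lemma exists_strictMono_tendsto_atTop_of_not_bddAbove {f : ℕ → ℝ}
    (hf : ¬ BddAbove (Set.range f)) :
    ∃ φ : ℕ → ℕ, StrictMono φ ∧ Tendsto (f ∘ φ) atTop atTop := by
  have hfreq : ∀ n : ℕ, ∃ᶠ k in atTop, (n : ℝ) ≤ f k := fun n hn =>
    hf (IsBoundedUnder.bddAbove_range ⟨n, hn.mono fun _ hk => (not_le.1 hk).le⟩)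
  obtain ⟨φ, hφ, hle⟩ := extraction_forall_of_frequently hfreq
  exact ⟨φ, hφ, tendsto_atTop_mono hle tendsto_natCast_atTop_atTop⟩

lemma StrictMono.tendsto_indicator_range {M : Type*} [TopologicalSpace M] [Zero M]
    {φ : ℕ → ℕ} (hφ : StrictMono φ) {f : ℕ → M} (hf : Tendsto (f ∘ φ) atTop (𝓝 0)) :
    Tendsto ((Set.range φ).indicator f) atTop (𝓝 0) := by
  rw [tendsto_def]
  intro s hs
  obtain ⟨N, hN⟩ := eventually_atTop.1 (hf hs)
  filter_upwards [eventually_ge_atTop (φ N)] with j hj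
  by_cases hjφ : j ∈ Set.range φ
  · obtain ⟨n, rfl⟩ := hjφ
    simpa [Set.indicator_of_mem] using hN n (hφ.le_iff_le.1 hj)
  · simpa [Set.indicator_of_notMem hjφ] using mem_of_mem_nhds hs

lemma exists_norm_mul_mem_Icc (K : Type*) [NontriviallyNormedField K] :
    ∃ c > 0, ∀ s : ℝ, 0 < s → ∃ x : K, c ≤ ‖x‖ * s ∧ ‖x‖ * s ≤ 1 := by
  obtain ⟨ξ, hξ⟩ := NormedField.exists_one_lt_norm K
  have hξ0 : 0 < ‖ξ‖ := one_pos.trans hξ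
  refine ⟨‖ξ‖⁻¹, inv_pos.2 hξ0, fun s hs => ?_⟩
  obtain ⟨n, hle, hlt⟩ := exists_mem_Ico_zpow (inv_pos.2 hs) hξ
  refine ⟨ξ ^ n, ?_, ?_⟩
  · rw [zpow_add_one₀ hξ0.ne', ← norm_zpow] at hlt
    rw [inv_le_iff_one_le_mul₀ hξ0]
    calc (1 : ℝ) = s⁻¹ * s := (inv_mul_cancel₀ hs.ne').symm
      _ ≤ ‖ξ ^ n‖ * ‖ξ‖ * s := by gcongr
      _ = ‖ξ ^ n‖ * s * ‖ξ‖ := by ring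
  · rw [norm_zpow, ← le_div_iff₀ hs, one_div]
    exact hle

namespace Eomega

variable {K : Type*} [NontriviallyNormedField K] {ω : ℕ → K}

lemma norm_apply_mul_sqrt_le (u : Eomega K ω) (i : ℕ) :
    ‖(u : ℕ → K) i‖ * Real.sqrt ‖ω i‖ ≤ ‖u‖ :=
  le_ciSup (Eomega.bddAbove u) i

lemma single_mem (j : ℕ) : (Pi.single j (1 : K) : ℕ → K) ∈ Eomega K ω := by
  refine tendsto_const_nhds.congr' ?_
  filter_upwards [eventually_gt_atTop j] with i hi
  simp [Pi.single_eq_of_ne hi.ne']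

end Eomega

section diagOp

variable {K : Type*} [NontriviallyNormedField K] {ω : ℕ → K}

@[simp]
lemma diagOp_apply (β : ℕ → K) (hβ : ∃ C, ∀ i, ‖β i‖ ≤ C) (u : Eomega K ω) (i : ℕ) :
    ((diagOp ω β hβ u : Eomega K ω) : ℕ → K) i = β i * (u : ℕ → K) i := rfl

lemma smul_id_sub_diagOp (μ : K) (α : ℕ → K) (hα : ∃ C, ∀ i, ‖α i‖ ≤ C)
    (hμα : ∃ C, ∀ i, ‖μ - α i‖ ≤ C) :
    μ • LinearMap.id - diagOp ω α hα = diagOp ω (fun i => μ - α i) hμα := by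
  ext u i
  simp [sub_mul]

lemma exists_norm_const_sub_le {α : ℕ → K} (hα : ∃ C, ∀ i, ‖α i‖ ≤ C) (μ : K) :
    ∃ C, ∀ i, ‖μ - α i‖ ≤ C := by
  obtain ⟨C, hC⟩ := hα
  exact ⟨‖μ‖ + C, fun i => (norm_sub_le _ _).trans (by linarith [hC i])⟩

lemma continuous_diagOp (β : ℕ → K) (hβ : ∃ C, ∀ i, ‖β i‖ ≤ C) :
    Continuous (diagOp ω β hβ) := by
  obtain ⟨C, hC⟩ := hβ
  refine AddMonoidHomClass.continuous_of_bound (diagOp ω β ⟨C, hC⟩) C fun u => ?_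
  refine ciSup_le fun i => ?_
  calc ‖β i * (u : ℕ → K) i‖ * Real.sqrt ‖ω i‖
      = ‖β i‖ * (‖(u : ℕ → K) i‖ * Real.sqrt ‖ω i‖) := by rw [norm_mul, mul_assoc]
    _ ≤ C * ‖u‖ := mul_le_mul (hC i) (Eomega.norm_apply_mul_sqrt_le u i) (by positivity)
        ((norm_nonneg _).trans (hC i))

lemma injective_diagOp {β : ℕ → K} (hβ : ∃ C, ∀ i, ‖β i‖ ≤ C) (hβ0 : ∀ i, β i ≠ 0) :
    Function.Injective (diagOp ω β hβ) := by
  intro u v huv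
  ext i
  exact mul_left_cancel₀ (hβ0 i) (congrFun (congrArg Subtype.val huv) i)

lemma exists_continuous_inverse_diagOp {β : ℕ → K} (hβ : ∃ C, ∀ i, ‖β i‖ ≤ C)
    (hβ0 : ∀ i, β i ≠ 0) (hβinv : ∃ C, ∀ i, ‖(β i)⁻¹‖ ≤ C) :
    ∃ S : Eomega K ω →ₗ[K] Eomega K ω, Continuous S ∧
      S ∘ₗ diagOp ω β hβ = LinearMap.id ∧ diagOp ω β hβ ∘ₗ S = LinearMap.id := by
  refine ⟨diagOp ω (fun i => (β i)⁻¹) hβinv, continuous_diagOp _ _, ?_, ?_⟩ <;>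
  · ext u i
    simp [hβ0 i]

lemma not_finiteDimensional_ker_diagOp {β : ℕ → K} (hβ : ∃ C, ∀ i, ‖β i‖ ≤ C)
    (hzero : {j | β j = 0}.Infinite) :
    ¬ FiniteDimensional K (LinearMap.ker (diagOp ω β hβ)) := by
  intro
  have : Infinite {j | β j = 0} := hzero.to_subtype
  have hker (j : ℕ) (hj : β j = 0) :
      (⟨Pi.single j 1, Eomega.single_mem j⟩ : Eomega K ω) ∈ LinearMap.ker (diagOp ω β hβ) := by
    ext i
    rcases eq_or_ne i j with rfl | hij
    · simp [hj]
    · simp [Pi.single_eq_of_ne hij]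
  refine Module.Finite.not_linearIndependent_of_infinite (R := K)
    (fun j : {j | β j = 0} => (⟨_, hker j j.2⟩ : LinearMap.ker (diagOp ω β hβ))) ?_
  exact LinearIndependent.of_comp ((Eomega K ω).subtype ∘ₗ (LinearMap.ker _).subtype)
    ((Pi.linearIndependent_single_one ℕ K).comp _ Subtype.val_injective)

lemma exists_norm_inv_le_of_surjective_diagOp (hω : ∀ i, ω i ≠ 0) {β : ℕ → K}
    (hβ : ∃ C, ∀ i, ‖β i‖ ≤ C) (hβ0 : ∀ i, β i ≠ 0)
    (hsurj : Function.Surjective (diagOp ω β hβ)) :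
    ∃ C, ∀ i, ‖(β i)⁻¹‖ ≤ C := by
  by_contra hunb
  obtain ⟨φ, hφ, hφ_inv⟩ := exists_strictMono_tendsto_atTop_of_not_bddAbove
    (f := fun i => ‖(β i)⁻¹‖) fun ⟨C, hC⟩ => hunb ⟨C, fun i => hC ⟨i, rfl⟩⟩
  have hφβ : Tendsto (fun n => ‖β (φ n)‖) atTop (𝓝 0) := by
    simpa [Function.comp_def] using tendsto_inv_atTop_zero.comp hφ_inv
  obtain ⟨c, hc, hw⟩ := exists_norm_mul_mem_Icc K
  choose w hw using fun j => hw _ (Real.sqrt_pos.2 (norm_pos_iff.2 (hω j)))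
  set v : ℕ → K := (Set.range φ).indicator fun j => β j * w j
  have hv : v ∈ Eomega K ω := by
    refine squeeze_zero (fun _ => by positivity) (fun j => ?_)
      (hφ.tendsto_indicator_range (f := fun j => ‖β j‖) hφβ)
    by_cases hj : j ∈ Set.range φ
    · simp only [v, Set.indicator_of_mem hj, norm_mul, mul_assoc]
      exact mul_le_of_le_one_right (norm_nonneg _) (hw j).2
    · simp [v, Set.indicator_of_notMem hj]
  obtain ⟨u, hu⟩ := hsurj ⟨v, hv⟩
  have huw (n : ℕ) : (u : ℕ → K) (φ n) = w (φ n) := by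
    have := congrFun (congrArg Subtype.val hu) (φ n)
    simp only [diagOp_apply, v, Set.indicator_of_mem (Set.mem_range_self n)] at this
    exact mul_left_cancel₀ (hβ0 _) this
  have hu0 : Tendsto (fun n => ‖w (φ n)‖ * Real.sqrt ‖ω (φ n)‖) atTop (𝓝 0) := by
    simpa only [Function.comp_def, huw] using u.2.comp hφ.tendsto_atTop
  exact hc.not_ge (ge_of_tendsto' hu0 fun n => (hw _).1)

end diagOp

section Fredholm

variable {K : Type*} [NontriviallyNormedField K] {ω : ℕ → K}

lemma IsFredholm0.surjective_of_injective {T : Eomega K ω →ₗ[K] Eomega K ω}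
    (hT : IsFredholm0 T) (hinj : Function.Injective T) : Function.Surjective T := by
  obtain ⟨-, -, hfin, hrank⟩ := hT
  have hq : Module.finrank K (Eomega K ω ⧸ LinearMap.range T) = 0 := by
    rw [← hrank, LinearMap.ker_eq_bot.2 hinj, finrank_bot]
  have := Module.finrank_zero_iff.1 hq
  rwa [← LinearMap.range_eq_top, ← Submodule.Quotient.subsingleton_iff]

lemma isFredholm0_of_bijective {T : Eomega K ω →ₗ[K] Eomega K ω}
    (hT : Function.Bijective T) : IsFredholm0 T := by
  have hker := LinearMap.ker_eq_bot.2 hT.1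
  have hrange := LinearMap.range_eq_top.2 hT.2
  refine ⟨?_, ?_, ?_, ?_⟩
  · rw [hker]
    infer_instance
  · rw [hrange]
    exact isClosed_univ
  · rw [hrange]
    infer_instance
  · rw [hker, hrange, finrank_bot, Module.finrank_zero_of_subsingleton]

end Fredholm

theorem stmt18_general {K : Type*} [NontriviallyNormedField K]
    (ω : ℕ → K) (hω : ∀ i, ω i ≠ 0)
    (α : ℕ → K) (hα : ∃ C, ∀ i, ‖α i‖ ≤ C)
    (hinf : ∀ i : ℕ, {j : ℕ | α j = α i}.Infinite) :
    essSpec (diagOp ω α hα) = specSet (diagOp ω α hα) := by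
  ext μ
  have hμα := exists_norm_const_sub_le hα μ
  simp only [essSpec, specSet, Set.mem_ofPred_eq, not_iff_not, smul_id_sub_diagOp μ α hα hμα]
  constructor
  · intro hF
    by_cases hμ : ∃ i, α i = μ
    · obtain ⟨i, rfl⟩ := hμ
      refine absurd hF.1 (not_finiteDimensional_ker_diagOp hμα ?_)
      simpa only [sub_eq_zero, eq_comm] using hinf i
    · have hne (i : ℕ) : μ - α i ≠ 0 := sub_ne_zero.2 fun h => hμ ⟨i, h.symm⟩
      exact exists_continuous_inverse_diagOp hμα hne <|
        exists_norm_inv_le_of_surjective_diagOp hω hμα hne <|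
          hF.surjective_of_injective (injective_diagOp hμα hne)
  · rintro ⟨S, -, hSl, hSr⟩
    exact isFredholm0_of_bijective
      ⟨Function.LeftInverse.injective (g := S) (LinearMap.congr_fun hSl),
        Function.RightInverse.surjective (LinearMap.congr_fun hSr)⟩

/-- If every diagonal entry of `D` is attained infinitely often,
then the essential spectrum of `D` equals its full spectrum. -/
theorem stmt18 {K : Type*} [NontriviallyNormedField K] [CompleteSpace K]
    (hna : ∀ x y : K, ‖x + y‖ ≤ max ‖x‖ ‖y‖)
    (ω : ℕ → K) (hω : ∀ i, ω i ≠ 0)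
    (α : ℕ → K) (hα : ∃ C, ∀ i, ‖α i‖ ≤ C)
    (hinf : ∀ i : ℕ, {j : ℕ | α j = α i}.Infinite) :
    essSpec (diagOp ω α hα) = specSet (diagOp ω α hα) :=
  stmt18_general ω hω α hα hinf
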